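/- Let α, β be real numbers with α > β > −1/2 and ρ = α + β + 1, and let c be the Jacobi c-function. There exists a constant C > 0, depending only on α and β, such that for every t > 0: ∫₀^∞ e^{−2t(λ²+ρ²)} |c(λ)|^{−2} dλ ≤ C e^{−2tρ²} (1 + t^{−(α+1)}); in particular, for each t > 0 the function λ ↦ e^{−t(λ²+ρ²)} belongs to L² of the measure |c(λ)|^{−2} dλ on (0, ∞). -/

import Mathlib

open Complex MeasureTheory

/-- The Jacobi `c`-function
`c(λ) = 2^{ρ−iλ} Γ(iλ) Γ(α+1) / (Γ((ρ+iλ)/2) Γ((ρ+iλ)/2 − β))` with `ρ = α+β+1`. -/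
noncomputable def jacobiC (α β : ℝ) (z : ℂ) : ℂ :=
  (2 : ℂ) ^ ((α : ℂ) + β + 1 - Complex.I * z) * Complex.Gamma (Complex.I * z) *
    Complex.Gamma ((α : ℂ) + 1) /
    (Complex.Gamma (((α : ℂ) + β + 1 + Complex.I * z) / 2) *
     Complex.Gamma (((α : ℂ) + β + 1 + Complex.I * z) / 2 - β))

/-- The Plancherel density measure `|c(λ)|⁻² dλ` on `(0,∞)`. -/
noncomputable def plancherelMeasure (α β : ℝ) : Measure ℝ :=
  (volume.restrict (Set.Ioi (0 : ℝ))).withDensity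
    (fun l => ENNReal.ofReal ((‖jacobiC α β (l : ℂ)‖ ^ 2)⁻¹))

/-!
With `a = (α + β + 1) / 2`, `b = (α - β + 1) / 2` and `|Γ(iλ)|² = π / (λ sinh πλ)`, the Plancherel
density is `|c(λ)|⁻² = λ sinh(πλ) |Γ(a + iλ/2)|² |Γ(b + iλ/2)|² / (π 4^ρ Γ(α + 1)²)`.
It is bounded for `λ ≤ 1` because `|Γ(x + iy)| ≤ Γ(x)`. For `λ ≥ 1`, Stirling's bound
`|Γ(x + iμ)|² ≲ μ^{2x-1} e^{-πμ}` gives `|c(λ)|⁻² ≲ λ^{2α+1}`: the exponents add up since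
`a + b = α + 1`, and the two factors `e^{-πλ/2}` absorb `sinh πλ`. Against the Gaussian `e^{-2tλ²}`
the weight `1 + λ^{2α+1}` integrates to `O(t^{-1/2} + t^{-(α+1)})`.

Stirling's bound follows from `|Γ(1 + iμ)|² = πμ / sinh πμ` and
`|Γ(x + 1 + iμ)|² = (x² + μ²) |Γ(x + iμ)|²` once `x = 1 + δ`, `0 ≤ δ ≤ 1`, is compared with `x = 1`
in Gauss's formula `Γ(s) = lim n^s n! / (s (s + 1) ⋯ (s + n))`: by weighted AM-GM,
`(k² + μ²)^{1-δ} ((k + 1)² + μ²)^δ ≤ ((k + δ)² + μ²) (1 + 1/(4k²))`, and the product over `k`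
telescopes.
-/

open scoped Real Nat
open Set Finset Filter Topology

theorem rpow_neg_le_one_add_rpow_neg {t p q : ℝ} (ht : 0 < t) (hp : 0 ≤ p) (hpq : p ≤ q) :
    t ^ (-p) ≤ 1 + t ^ (-q) := by
  rcases le_total t 1 with h | h
  · linarith [Real.rpow_le_rpow_of_exponent_ge ht h (neg_le_neg hpq)]
  · linarith [Real.rpow_le_one_of_one_le_of_nonpos h (neg_nonpos.mpr hp),
      Real.rpow_nonneg ht.le (-q)]

theorem rpow_mul_rpow_le_sq_add_mul {k δ c : ℝ} (hk : 1 ≤ k) (hδ0 : 0 ≤ δ) (hδ1 : δ ≤ 1)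
    (hc : 0 ≤ c) :
    (k ^ 2 + c) ^ (1 - δ) * ((k + 1) ^ 2 + c) ^ δ ≤ ((k + δ) ^ 2 + c) * (1 + 1 / (4 * k ^ 2)) := by
  have hT : k ^ 2 ≤ (k + δ) ^ 2 + c := by nlinarith
  have herr : δ * (1 - δ) ≤ ((k + δ) ^ 2 + c) / (4 * k ^ 2) := by
    rw [le_div_iff₀ (by positivity)]
    nlinarith [sq_nonneg (δ - 1 / 2)]
  calc (k ^ 2 + c) ^ (1 - δ) * ((k + 1) ^ 2 + c) ^ δ
      ≤ (1 - δ) * (k ^ 2 + c) + δ * ((k + 1) ^ 2 + c) :=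
        Real.geom_mean_le_arith_mean2_weighted (by linarith) hδ0 (by positivity) (by positivity)
          (by ring)
    _ = ((k + δ) ^ 2 + c) + δ * (1 - δ) := by ring
    _ ≤ ((k + δ) ^ 2 + c) * (1 + 1 / (4 * k ^ 2)) := by
        rw [mul_add, mul_one, mul_one_div]; linarith

theorem prod_sq_add_mul_rpow_le {δ c : ℝ} (hδ0 : 0 ≤ δ) (hδ1 : δ ≤ 1) (hc : 0 ≤ c) (N : ℕ) :
    (∏ j ∈ range N, ((1 + j : ℝ) ^ 2 + c)) * ((1 + N : ℝ) ^ 2 + c) ^ δ ≤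
      (1 + c) ^ δ * (∏ j ∈ range N, ((1 + δ + j : ℝ) ^ 2 + c)) *
        ∏ j ∈ range N, (1 + 1 / (4 * (1 + j : ℝ) ^ 2)) := by
  induction N with
  | zero => simp
  | succ N ih =>
    have hA : 0 < (1 + N : ℝ) ^ 2 + c := by positivity
    have hstep := rpow_mul_rpow_le_sq_add_mul (k := 1 + N) (by simp) hδ0 hδ1 hc
    simp only [prod_range_succ, Nat.cast_succ, ← add_assoc]
    calc (∏ j ∈ range N, ((1 + j : ℝ) ^ 2 + c)) * ((1 + N : ℝ) ^ 2 + c) *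
          ((1 + N + 1 : ℝ) ^ 2 + c) ^ δ
        = (∏ j ∈ range N, ((1 + j : ℝ) ^ 2 + c)) *
            (((1 + N : ℝ) ^ 2 + c) ^ δ * ((1 + N : ℝ) ^ 2 + c) ^ (1 - δ)) *
            ((1 + N + 1 : ℝ) ^ 2 + c) ^ δ := by
          rw [← Real.rpow_add hA, add_sub_cancel, Real.rpow_one]
      _ = ((∏ j ∈ range N, ((1 + j : ℝ) ^ 2 + c)) * ((1 + N : ℝ) ^ 2 + c) ^ δ) *
            (((1 + N : ℝ) ^ 2 + c) ^ (1 - δ) * ((1 + N + 1 : ℝ) ^ 2 + c) ^ δ) := by ring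
      _ ≤ ((1 + c) ^ δ * (∏ j ∈ range N, ((1 + δ + j : ℝ) ^ 2 + c)) *
            ∏ j ∈ range N, (1 + 1 / (4 * (1 + j : ℝ) ^ 2))) *
            (((1 + N + δ : ℝ) ^ 2 + c) * (1 + 1 / (4 * (1 + N : ℝ) ^ 2))) :=
          mul_le_mul ih hstep (by positivity) (by positivity)
      _ = _ := by ring

theorem prod_one_add_inv_four_sq_le (N : ℕ) :
    ∏ j ∈ range N, (1 + 1 / (4 * (1 + j : ℝ) ^ 2)) ≤ Real.exp (π ^ 2 / 24) := by
  refine (Real.prod_one_add_le_exp_sum _ fun j => by positivity).trans (Real.exp_le_exp.mpr ?_)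
  have hzeta := sum_le_hasSum (range (N + 1)) (fun n _ => by positivity) hasSum_zeta_two
  rw [sum_range_succ'] at hzeta
  calc ∑ j ∈ range N, 1 / (4 * (1 + j : ℝ) ^ 2)
      = (∑ j ∈ range N, 1 / ((j + 1 : ℕ) : ℝ) ^ 2) / 4 := by
        rw [sum_div]; refine sum_congr rfl fun j _ => ?_; push_cast; field_simp; ring
    _ ≤ (π ^ 2 / 6) / 4 := by gcongr; simpa using hzeta
    _ = π ^ 2 / 24 := by ring

theorem rpow_mul_prod_le_mul_prod {δ μ : ℝ} (hδ0 : 0 ≤ δ) (hδ1 : δ ≤ 1) (hμ : 1 / 2 ≤ μ) (n : ℕ) :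
    (n : ℝ) ^ (2 * δ) * ∏ j ∈ range (n + 1), ((1 + j : ℝ) ^ 2 + μ ^ 2) ≤
      5 * Real.exp (π ^ 2 / 24) * μ ^ (2 * δ) *
        ∏ j ∈ range (n + 1), ((1 + δ + j : ℝ) ^ 2 + μ ^ 2) := by
  have hμ0 : 0 < μ := by linarith
  have hprod := prod_sq_add_mul_rpow_le hδ0 hδ1 (sq_nonneg μ) (n + 1)
  have herr := prod_one_add_inv_four_sq_le (n + 1)
  have hn : (n : ℝ) ^ (2 * δ) ≤ ((1 + (n + 1 : ℕ) : ℝ) ^ 2 + μ ^ 2) ^ δ := by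
    rw [Real.rpow_mul n.cast_nonneg, Real.rpow_two]
    refine Real.rpow_le_rpow (by positivity) ?_ hδ0
    push_cast
    nlinarith [sq_nonneg μ, (n.cast_nonneg : (0 : ℝ) ≤ n)]
  have hμδ : (1 + μ ^ 2) ^ δ ≤ 5 * μ ^ (2 * δ) := by
    calc (1 + μ ^ 2) ^ δ ≤ (5 * μ ^ 2) ^ δ := Real.rpow_le_rpow (by positivity) (by nlinarith) hδ0
      _ = 5 ^ δ * μ ^ (2 * δ) := by
        rw [Real.mul_rpow (by norm_num) (by positivity), Real.rpow_mul hμ0.le, Real.rpow_two]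
      _ ≤ 5 * μ ^ (2 * δ) := by
        gcongr
        simpa using Real.rpow_le_rpow_of_exponent_le (by norm_num : (1 : ℝ) ≤ 5) hδ1
  calc (n : ℝ) ^ (2 * δ) * ∏ j ∈ range (n + 1), ((1 + j : ℝ) ^ 2 + μ ^ 2)
      ≤ (∏ j ∈ range (n + 1), ((1 + j : ℝ) ^ 2 + μ ^ 2)) *
          ((1 + (n + 1 : ℕ) : ℝ) ^ 2 + μ ^ 2) ^ δ := by
        rw [mul_comm]; gcongr
    _ ≤ (1 + μ ^ 2) ^ δ * (∏ j ∈ range (n + 1), ((1 + δ + j : ℝ) ^ 2 + μ ^ 2)) *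
          ∏ j ∈ range (n + 1), (1 + 1 / (4 * (1 + j : ℝ) ^ 2)) := hprod
    _ ≤ (5 * μ ^ (2 * δ)) * (∏ j ∈ range (n + 1), ((1 + δ + j : ℝ) ^ 2 + μ ^ 2)) *
          Real.exp (π ^ 2 / 24) := by gcongr
    _ = _ := by ring

theorem setIntegral_rpow_mul_exp_neg_mul_sq {b s : ℝ} (hb : 0 < b) (hs : -1 < s) :
    ∫ l in Ioi (0 : ℝ), l ^ s * Real.exp (-b * l ^ 2) =
      b ^ (-(s + 1) / 2) * (1 / 2) * Real.Gamma ((s + 1) / 2) := by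
  simpa [Real.rpow_two] using integral_rpow_mul_exp_neg_mul_rpow two_pos hs hb

theorem integrableOn_exp_neg_mul_sq_mul_one_add_rpow {b s : ℝ} (hb : 0 < b) (hs : -1 < s) :
    IntegrableOn (fun l : ℝ => Real.exp (-b * l ^ 2) * (1 + l ^ s)) (Ioi 0) :=
  ((integrableOn_rpow_mul_exp_neg_mul_sq hb (by norm_num : (-1 : ℝ) < 0)).add
    (integrableOn_rpow_mul_exp_neg_mul_sq hb hs)).congr_fun
    (fun l _ => by simp only [Pi.add_apply, Real.rpow_zero]; ring) measurableSet_Ioi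

theorem setIntegral_exp_neg_mul_sq_mul_one_add_rpow_le {b r : ℝ} (hb : 0 < b) (hr : 1 / 2 ≤ r) :
    ∫ l in Ioi (0 : ℝ), Real.exp (-b * l ^ 2) * (1 + l ^ (2 * r - 1)) ≤
      (Real.Gamma (1 / 2) + Real.Gamma r) / 2 * (1 + b ^ (-r)) := by
  have hint (s : ℝ) (hs : -1 < s) := integrableOn_rpow_mul_exp_neg_mul_sq hb hs
  have hsplit : (fun l : ℝ => Real.exp (-b * l ^ 2) * (1 + l ^ (2 * r - 1))) =
      fun l => l ^ (0 : ℝ) * Real.exp (-b * l ^ 2) + l ^ (2 * r - 1) * Real.exp (-b * l ^ 2) := by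
    funext l; rw [Real.rpow_zero]; ring
  rw [hsplit, integral_add (hint 0 (by norm_num)) (hint _ (by linarith)),
    setIntegral_rpow_mul_exp_neg_mul_sq hb (by norm_num),
    setIntegral_rpow_mul_exp_neg_mul_sq hb (by linarith),
    show -((0 : ℝ) + 1) / 2 = -(1 / 2) by ring, show (0 + 1) / 2 = (1 / 2 : ℝ) by ring,
    show -(2 * r - 1 + 1) / 2 = -r by ring, show (2 * r - 1 + 1) / 2 = r by ring]
  have h₀ := rpow_neg_le_one_add_rpow_neg hb (by norm_num) hr
  have h₁ : b ^ (-r) ≤ 1 + b ^ (-r) := by linarith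
  have hΓ₀ := Real.Gamma_pos_of_pos (by norm_num : (0 : ℝ) < 1 / 2)
  have hΓ₁ := Real.Gamma_pos_of_pos (by linarith : 0 < r)
  nlinarith

theorem setIntegral_exp_neg_mul_sq_mul_le {w : ℝ → ℝ} {M b r : ℝ} (hb : 0 < b) (hr : 1 / 2 ≤ r)
    (hw₀ : ∀ l : ℝ, 0 < l → 0 ≤ w l) (hw : ∀ l : ℝ, 0 < l → w l ≤ M * (1 + l ^ (2 * r - 1))) :
    ∫ l in Ioi (0 : ℝ), Real.exp (-b * l ^ 2) * w l ≤
      M * ((Real.Gamma (1 / 2) + Real.Gamma r) / 2 * (1 + b ^ (-r))) := by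
  have hM : 0 ≤ M := by nlinarith [hw₀ 1 one_pos, hw 1 one_pos, Real.one_rpow (2 * r - 1)]
  have hint := integrableOn_exp_neg_mul_sq_mul_one_add_rpow hb (by linarith : -1 < 2 * r - 1)
  calc ∫ l in Ioi (0 : ℝ), Real.exp (-b * l ^ 2) * w l
      ≤ ∫ l in Ioi (0 : ℝ), M * (Real.exp (-b * l ^ 2) * (1 + l ^ (2 * r - 1))) := by
        refine integral_mono_of_nonneg ?_ (hint.const_mul M) ?_
        · exact (ae_restrict_iff' measurableSet_Ioi).mpr (ae_of_all _ fun l hl =>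
            mul_nonneg (Real.exp_pos _).le (hw₀ l hl))
        · refine (ae_restrict_iff' measurableSet_Ioi).mpr (ae_of_all _ fun l hl => ?_)
          calc Real.exp (-b * l ^ 2) * w l
              ≤ Real.exp (-b * l ^ 2) * (M * (1 + l ^ (2 * r - 1))) := by gcongr; exact hw l hl
            _ = _ := by ring
    _ ≤ _ := by
        rw [integral_const_mul]
        exact mul_le_mul_of_nonneg_left (setIntegral_exp_neg_mul_sq_mul_one_add_rpow_le hb hr) hM

theorem setIntegral_exp_neg_two_mul_sq_add_mul_le {w : ℝ → ℝ} {M r t c : ℝ} (ht : 0 < t)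
    (hr : 1 / 2 ≤ r) (hw₀ : ∀ l : ℝ, 0 < l → 0 ≤ w l)
    (hw : ∀ l : ℝ, 0 < l → w l ≤ M * (1 + l ^ (2 * r - 1))) :
    ∫ l in Ioi (0 : ℝ), Real.exp (-2 * t * (l ^ 2 + c)) * w l ≤
      M * ((Real.Gamma (1 / 2) + Real.Gamma r) / 2) * Real.exp (-2 * t * c) * (1 + t ^ (-r)) := by
  have hM : 0 ≤ M := by nlinarith [hw₀ 1 one_pos, hw 1 one_pos, Real.one_rpow (2 * r - 1)]
  have hK : 0 ≤ (Real.Gamma (1 / 2) + Real.Gamma r) / 2 := by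
    have := Real.Gamma_pos_of_pos (by linarith : 0 < r)
    positivity
  have h2t : (2 * t) ^ (-r) ≤ t ^ (-r) := Real.rpow_le_rpow_of_nonpos ht (by linarith) (by linarith)
  calc ∫ l in Ioi (0 : ℝ), Real.exp (-2 * t * (l ^ 2 + c)) * w l
      = Real.exp (-2 * t * c) * ∫ l in Ioi (0 : ℝ), Real.exp (-(2 * t) * l ^ 2) * w l := by
        rw [← integral_const_mul]
        congr 1 with l
        rw [← mul_assoc, ← Real.exp_add]
        ring_nf
    _ ≤ Real.exp (-2 * t * c) *
          (M * ((Real.Gamma (1 / 2) + Real.Gamma r) / 2 * (1 + (2 * t) ^ (-r)))) := by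
        gcongr
        exact setIntegral_exp_neg_mul_sq_mul_le (by positivity) hr hw₀ hw
    _ ≤ Real.exp (-2 * t * c) *
          (M * ((Real.Gamma (1 / 2) + Real.Gamma r) / 2 * (1 + t ^ (-r)))) := by gcongr
    _ = _ := by ring

theorem memLp_exp_neg_mul_sq_withDensity {t c M s : ℝ} (ht : 0 < t) (hs : -1 < s) (hM : 0 ≤ M) :
    MemLp (fun l : ℝ => Real.exp (-t * (l ^ 2 + c))) 2
      ((volume.restrict (Ioi 0)).withDensity fun l => ENNReal.ofReal (M * (1 + l ^ s))) := by
  have hcont : Continuous fun l : ℝ => Real.exp (-t * (l ^ 2 + c)) := by fun_prop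
  rw [memLp_two_iff_integrable_sq hcont.aestronglyMeasurable,
    integrable_withDensity_iff (by fun_prop) (ae_of_all _ fun _ => ENNReal.ofReal_lt_top)]
  refine ((integrableOn_exp_neg_mul_sq_mul_one_add_rpow (mul_pos two_pos ht) hs).const_mul
    (M * Real.exp (-2 * t * c))).congr ((ae_restrict_iff' measurableSet_Ioi).mpr
    (ae_of_all _ fun l (hl : 0 < l) => ?_))
  simp only
  rw [ENNReal.toReal_ofReal (by positivity), ← Real.exp_nat_mul,
    show ((2 : ℕ) : ℝ) * (-t * (l ^ 2 + c)) = -2 * t * c + -(2 * t) * l ^ 2 by push_cast; ring,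
    Real.exp_add]
  ring

namespace Complex

theorem norm_Gamma_le_Gamma_re {z : ℂ} (hz : 0 < z.re) : ‖Gamma z‖ ≤ Real.Gamma z.re := by
  rw [Gamma_eq_integral hz, Real.Gamma_eq_integral hz, GammaIntegral]
  refine (norm_integral_le_integral_norm _).trans_eq (setIntegral_congr_fun measurableSet_Ioi ?_)
  intro t ht
  simp [norm_cpow_eq_rpow_re_of_pos ht, norm_exp]

theorem sq_norm_Gamma_add_one_add_mul_I (x : ℝ) {μ : ℝ} (hμ : μ ≠ 0) :
    ‖Gamma ((x + 1 : ℝ) + μ * I)‖ ^ 2 = (x ^ 2 + μ ^ 2) * ‖Gamma (x + μ * I)‖ ^ 2 := by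
  have hz : (x : ℂ) + μ * I ≠ 0 := fun h => hμ (by simpa using congrArg im h)
  rw [show ((x + 1 : ℝ) : ℂ) + μ * I = (x + μ * I) + 1 by push_cast; ring, Gamma_add_one _ hz,
    norm_mul, mul_pow, Complex.sq_norm, normSq_add_mul_I]

theorem sq_norm_Gamma_one_add_mul_I {μ : ℝ} (hμ : μ ≠ 0) :
    ‖Gamma (1 + μ * I)‖ ^ 2 = π * μ / Real.sinh (π * μ) := by
  have hz : (μ : ℂ) * I ≠ 0 := by simpa using hμ
  have hconj : Gamma (1 - μ * I) = starRingEnd ℂ (Gamma (1 + μ * I)) := by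
    rw [← Gamma_conj]; congr 1; simp [Complex.ext_iff]
  have hsin : sin (π * (μ * I)) = Real.sinh (π * μ) * I := by
    rw [show (π : ℂ) * (μ * I) = ((π * μ : ℝ) : ℂ) * I by push_cast; ring, sin_mul_I, ofReal_sinh]
  -- `Γ(1 + iμ) Γ(1 - iμ) = iμ Γ(iμ) Γ(1 - iμ) = iμ π / sin(iπμ)` by the reflection formula
  have key : (normSq (Gamma (1 + μ * I)) : ℂ) = ((π * μ / Real.sinh (π * μ) : ℝ) : ℂ) := by
    rw [← mul_conj, ← hconj, add_comm, Gamma_add_one _ hz, mul_assoc, Gamma_mul_Gamma_one_sub,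
      hsin]
    have hs : (Real.sinh (π * μ) : ℂ) ≠ 0 := by
      exact_mod_cast (Real.sinh_ne_zero.mpr (mul_ne_zero Real.pi_ne_zero hμ))
    push_cast
    field_simp
  rw [Complex.sq_norm, ofReal_inj.mp key]

theorem sq_norm_Gamma_mul_I {l : ℝ} (hl : l ≠ 0) :
    ‖Gamma (I * l)‖ ^ 2 = π / (l * Real.sinh (π * l)) := by
  have h := sq_norm_Gamma_add_one_add_mul_I 0 hl
  rw [show ((0 + 1 : ℝ) : ℂ) + l * I = 1 + l * I by norm_num, sq_norm_Gamma_one_add_mul_I hl,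
    show ((0 : ℝ) : ℂ) + l * I = I * l by push_cast; ring] at h
  have hs : Real.sinh (π * l) ≠ 0 := Real.sinh_ne_zero.mpr (mul_ne_zero Real.pi_ne_zero hl)
  rw [zero_pow two_ne_zero, zero_add, div_eq_iff hs] at h
  rw [eq_div_iff (mul_ne_zero hl hs)]
  apply mul_left_cancel₀ hl
  linear_combination -h

theorem sq_norm_Gamma_one_add_mul_I_le {μ : ℝ} (hμ : 1 / 2 ≤ μ) :
    ‖Gamma (1 + μ * I)‖ ^ 2 ≤ 4 * π * μ * Real.exp (-π * μ) := by
  have hμ0 : 0 < μ := by linarith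
  have hx : 1 ≤ π * μ := by nlinarith [Real.pi_gt_three]
  have hsinh : Real.exp (π * μ) / 4 ≤ Real.sinh (π * μ) := by
    have h2 : 2 ≤ Real.exp (π * μ) * Real.exp (π * μ) := by
      rw [← Real.exp_add]; linarith [Real.add_one_le_exp (π * μ + π * μ)]
    have h1 : Real.exp (-(π * μ)) * Real.exp (π * μ) = 1 := by
      rw [← Real.exp_add]; simp
    rw [Real.sinh_eq]
    nlinarith [Real.exp_pos (π * μ), Real.exp_pos (-(π * μ))]
  rw [sq_norm_Gamma_one_add_mul_I hμ0.ne', div_le_iff₀ (by positivity)]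
  calc π * μ = 4 * π * μ * Real.exp (-π * μ) * (Real.exp (π * μ) / 4) := by
        rw [neg_mul, Real.exp_neg]; field_simp
    _ ≤ 4 * π * μ * Real.exp (-π * μ) * Real.sinh (π * μ) := by gcongr

theorem sq_norm_GammaSeq (x μ : ℝ) {n : ℕ} (hn : 0 < n) :
    ‖GammaSeq (x + μ * I) n‖ ^ 2 =
      (n : ℝ) ^ (2 * x) * (n ! : ℝ) ^ 2 / ∏ j ∈ range (n + 1), ((x + j) ^ 2 + μ ^ 2) := by
  rw [GammaSeq, norm_div, norm_mul, div_pow, mul_pow, norm_prod, ← Finset.prod_pow,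
    norm_natCast_cpow_of_pos hn, norm_natCast, ← Real.rpow_natCast, ← Real.rpow_mul n.cast_nonneg]
  congr 2
  · simp [mul_comm]
  · funext j
    rw [show (x : ℂ) + μ * I + j = ((x + j : ℝ) : ℂ) + μ * I by push_cast; ring, Complex.sq_norm,
      normSq_add_mul_I]

theorem sq_norm_Gamma_one_add_add_mul_I_le {δ μ : ℝ} (hδ0 : 0 ≤ δ) (hδ1 : δ ≤ 1)
    (hμ : 1 / 2 ≤ μ) :
    ‖Gamma ((1 + δ : ℝ) + μ * I)‖ ^ 2 ≤
      5 * Real.exp (π ^ 2 / 24) * μ ^ (2 * δ) * ‖Gamma (1 + μ * I)‖ ^ 2 := by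
  have hlim (x : ℝ) :
      Tendsto (fun n => ‖GammaSeq (x + μ * I) n‖ ^ 2) atTop (𝓝 (‖Gamma (x + μ * I)‖ ^ 2)) :=
    (GammaSeq_tendsto_Gamma _).norm.pow 2
  have hlim1 := hlim 1
  rw [ofReal_one] at hlim1
  refine le_of_tendsto_of_tendsto (hlim (1 + δ)) (hlim1.const_mul _) ?_
  filter_upwards [eventually_gt_atTop 0] with n hn
  have hseq1 := sq_norm_GammaSeq 1 μ hn
  rw [ofReal_one] at hseq1
  have hP0 : 0 < ∏ j ∈ range (n + 1), ((1 + j : ℝ) ^ 2 + μ ^ 2) := by positivity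
  have hPδ : 0 < ∏ j ∈ range (n + 1), ((1 + δ + j : ℝ) ^ 2 + μ ^ 2) := by
    refine prod_pos fun j _ => ?_; positivity
  rw [sq_norm_GammaSeq _ _ hn, hseq1, ← mul_div_assoc, div_le_div_iff₀ hPδ hP0,
    show 2 * (1 + δ) = 2 * δ + 2 * 1 by ring, Real.rpow_add (by exact_mod_cast hn)]
  calc (n : ℝ) ^ (2 * δ) * (n : ℝ) ^ (2 * 1 : ℝ) * (n ! : ℝ) ^ 2 *
        ∏ j ∈ range (n + 1), ((1 + j : ℝ) ^ 2 + μ ^ 2)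
      = ((n : ℝ) ^ (2 * δ) * ∏ j ∈ range (n + 1), ((1 + j : ℝ) ^ 2 + μ ^ 2)) *
          ((n : ℝ) ^ (2 * 1 : ℝ) * (n ! : ℝ) ^ 2) := by ring
    _ ≤ (5 * Real.exp (π ^ 2 / 24) * μ ^ (2 * δ) *
          ∏ j ∈ range (n + 1), ((1 + δ + j : ℝ) ^ 2 + μ ^ 2)) *
          ((n : ℝ) ^ (2 * 1 : ℝ) * (n ! : ℝ) ^ 2) :=
        mul_le_mul_of_nonneg_right (rpow_mul_prod_le_mul_prod hδ0 hδ1 hμ n) (by positivity)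
    _ = _ := by ring

def GammaStirlingBound (x : ℝ) : Prop :=
  ∃ C : ℝ, ∀ μ : ℝ, 1 / 2 ≤ μ → ‖Gamma (x + μ * I)‖ ^ 2 ≤ C * μ ^ (2 * x - 1) * Real.exp (-π * μ)

namespace GammaStirlingBound

theorem add_one {x : ℝ} (h : GammaStirlingBound x) : GammaStirlingBound (x + 1) := by
  obtain ⟨C, hC⟩ := h
  refine ⟨(4 * x ^ 2 + 1) * C, fun μ hμ => ?_⟩
  have hμ0 : 0 < μ := by linarith
  have hbound := hC μ hμ
  have hnonneg : 0 ≤ C * μ ^ (2 * x - 1) * Real.exp (-π * μ) := (sq_nonneg _).trans hbound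
  have hx : x ^ 2 ≤ 4 * x ^ 2 * μ ^ 2 := by
    nlinarith [mul_le_mul_of_nonneg_left (by nlinarith : 1 / 4 ≤ μ ^ 2) (sq_nonneg x)]
  rw [sq_norm_Gamma_add_one_add_mul_I x hμ0.ne', show 2 * (x + 1) - 1 = (2 * x - 1) + 2 by ring,
    Real.rpow_add hμ0, Real.rpow_two]
  calc (x ^ 2 + μ ^ 2) * ‖Gamma (x + μ * I)‖ ^ 2
      ≤ ((4 * x ^ 2 + 1) * μ ^ 2) * (C * μ ^ (2 * x - 1) * Real.exp (-π * μ)) :=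
        mul_le_mul (by nlinarith) hbound (by positivity) (by positivity)
    _ = _ := by ring

theorem of_add_one {x : ℝ} (h : GammaStirlingBound (x + 1)) : GammaStirlingBound x := by
  obtain ⟨C, hC⟩ := h
  refine ⟨C, fun μ hμ => ?_⟩
  have hμ0 : 0 < μ := by linarith
  have hbound := hC μ hμ
  rw [sq_norm_Gamma_add_one_add_mul_I x hμ0.ne', show 2 * (x + 1) - 1 = (2 * x - 1) + 2 by ring,
    Real.rpow_add hμ0, Real.rpow_two] at hbound
  refine le_of_mul_le_mul_left ?_ (by positivity : 0 < μ ^ 2)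
  calc μ ^ 2 * ‖Gamma (x + μ * I)‖ ^ 2 ≤ (x ^ 2 + μ ^ 2) * ‖Gamma (x + μ * I)‖ ^ 2 := by
        gcongr; nlinarith
    _ ≤ _ := hbound
    _ = _ := by ring

theorem add_nat {x : ℝ} (h : GammaStirlingBound x) (n : ℕ) : GammaStirlingBound (x + n) := by
  induction n with
  | zero => simpa using h
  | succ n ih => rw [Nat.cast_succ, ← add_assoc]; exact ih.add_one

end GammaStirlingBound

theorem gammaStirlingBound_one_add {δ : ℝ} (hδ0 : 0 ≤ δ) (hδ1 : δ ≤ 1) :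
    GammaStirlingBound (1 + δ) := by
  refine ⟨5 * Real.exp (π ^ 2 / 24) * (4 * π), fun μ hμ => ?_⟩
  have hμ0 : 0 < μ := by linarith
  calc ‖Gamma ((1 + δ : ℝ) + μ * I)‖ ^ 2
      ≤ 5 * Real.exp (π ^ 2 / 24) * μ ^ (2 * δ) * ‖Gamma (1 + μ * I)‖ ^ 2 :=
        sq_norm_Gamma_one_add_add_mul_I_le hδ0 hδ1 hμ
    _ ≤ 5 * Real.exp (π ^ 2 / 24) * μ ^ (2 * δ) * (4 * π * μ * Real.exp (-π * μ)) := by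
        gcongr; exact sq_norm_Gamma_one_add_mul_I_le hμ
    _ = _ := by
        rw [show 2 * (1 + δ) - 1 = 2 * δ + 1 by ring, Real.rpow_add_one hμ0.ne']; ring

theorem gammaStirlingBound {x : ℝ} (hx : 0 ≤ x) : GammaStirlingBound x := by
  have hfloor := Nat.floor_le hx
  have h := (gammaStirlingBound_one_add (δ := x - ⌊x⌋₊) (by linarith)
    (by linarith [Nat.lt_floor_add_one x])).add_nat ⌊x⌋₊
  exact GammaStirlingBound.of_add_one (by convert h using 1; ring)

end Complex

theorem inv_sq_norm_jacobiC (α β : ℝ) {l : ℝ} (hl : l ≠ 0) :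
    (‖jacobiC α β l‖ ^ 2)⁻¹ =
      l * Real.sinh (π * l) * ‖Gamma (((α + β + 1) / 2 : ℝ) + (l / 2 : ℝ) * I)‖ ^ 2 *
        ‖Gamma (((α - β + 1) / 2 : ℝ) + (l / 2 : ℝ) * I)‖ ^ 2 /
        (π * ((2 : ℝ) ^ (α + β + 1)) ^ 2 * ‖Gamma (α + 1)‖ ^ 2) := by
  have h2 : ‖(2 : ℂ) ^ ((α : ℂ) + β + 1 - I * l)‖ = (2 : ℝ) ^ (α + β + 1) := by
    rw [show (2 : ℂ) = ((2 : ℝ) : ℂ) by norm_num, norm_cpow_eq_rpow_re_of_pos two_pos]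
    simp
  rw [jacobiC, norm_div, norm_mul, norm_mul, norm_mul, h2,
    show ((α : ℂ) + β + 1 + I * l) / 2 - β = ((α - β + 1) / 2 : ℝ) + (l / 2 : ℝ) * I by
      push_cast; ring,
    show ((α : ℂ) + β + 1 + I * l) / 2 = ((α + β + 1) / 2 : ℝ) + (l / 2 : ℝ) * I by
      push_cast; ring,
    div_pow, mul_pow, mul_pow, mul_pow, sq_norm_Gamma_mul_I hl]
  simp only [div_eq_mul_inv, mul_inv, inv_inv]
  ring

theorem inv_sq_norm_jacobiC_le_of_le_one (α β : ℝ) (ha : 0 < α + β + 1) (hb : 0 < α - β + 1) :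
    ∃ M : ℝ, ∀ l : ℝ, 0 < l → l ≤ 1 → (‖jacobiC α β l‖ ^ 2)⁻¹ ≤ M := by
  refine ⟨Real.sinh π * Real.Gamma ((α + β + 1) / 2) ^ 2 * Real.Gamma ((α - β + 1) / 2) ^ 2 /
    (π * ((2 : ℝ) ^ (α + β + 1)) ^ 2 * ‖Gamma (α + 1)‖ ^ 2), fun l hl hl1 => ?_⟩
  have hsinh : l * Real.sinh (π * l) ≤ Real.sinh π := by
    have := Real.sinh_le_sinh.mpr (show π * l ≤ π by nlinarith [Real.pi_pos])
    nlinarith [Real.sinh_pos_iff.mpr (mul_pos Real.pi_pos hl)]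
  have hGamma {x : ℝ} (hx : 0 < x) : ‖Gamma (x + (l / 2 : ℝ) * I)‖ ≤ Real.Gamma x := by
    simpa using norm_Gamma_le_Gamma_re (z := x + (l / 2 : ℝ) * I) (by simpa using hx)
  rw [inv_sq_norm_jacobiC α β hl.ne']
  gcongr
  · exact hGamma (by linarith)
  · exact hGamma (by linarith)

theorem inv_sq_norm_jacobiC_le_of_one_le (α β : ℝ) (ha : 0 ≤ α + β + 1) (hb : 0 ≤ α - β + 1) :
    ∃ M : ℝ, ∀ l : ℝ, 1 ≤ l → (‖jacobiC α β l‖ ^ 2)⁻¹ ≤ M * l ^ (2 * α + 1) := by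
  obtain ⟨Ca, hCa⟩ := gammaStirlingBound (x := (α + β + 1) / 2) (by linarith)
  obtain ⟨Cb, hCb⟩ := gammaStirlingBound (x := (α - β + 1) / 2) (by linarith)
  refine ⟨Ca * Cb / (2 ^ (2 * α + 1) *
    (π * ((2 : ℝ) ^ (α + β + 1)) ^ 2 * ‖Gamma (α + 1)‖ ^ 2)), fun l hl => ?_⟩
  have hl0 : 0 < l := by linarith
  have hμ : 1 / 2 ≤ l / 2 := by linarith
  have hsinh : l * Real.sinh (π * l) ≤ l * Real.exp (π * l) / 2 := by
    rw [Real.sinh_eq, mul_div_assoc]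
    gcongr
    linarith [Real.exp_pos (-(π * l))]
  have hprod : l * Real.sinh (π * l) * ‖Gamma (((α + β + 1) / 2 : ℝ) + (l / 2 : ℝ) * I)‖ ^ 2 *
      ‖Gamma (((α - β + 1) / 2 : ℝ) + (l / 2 : ℝ) * I)‖ ^ 2 ≤
      Ca * Cb / 2 ^ (2 * α + 1) * l ^ (2 * α + 1) := by
    calc _ ≤ (l * Real.exp (π * l) / 2) *
          (Ca * (l / 2) ^ (2 * ((α + β + 1) / 2) - 1) * Real.exp (-π * (l / 2))) *
          (Cb * (l / 2) ^ (2 * ((α - β + 1) / 2) - 1) * Real.exp (-π * (l / 2))) := by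
          gcongr
          · exact mul_nonneg (by positivity) ((sq_nonneg _).trans (hCa _ hμ))
          · exact hCa _ hμ
          · exact hCb _ hμ
      _ = Ca * Cb * (l * ((l / 2) ^ (2 * ((α + β + 1) / 2) - 1) *
            (l / 2) ^ (2 * ((α - β + 1) / 2) - 1))) / 2 *
            (Real.exp (π * l) * Real.exp (-π * (l / 2)) * Real.exp (-π * (l / 2))) := by ring
      _ = Ca * Cb / 2 ^ (2 * α + 1) * l ^ (2 * α + 1) := by
          rw [← Real.exp_add, ← Real.exp_add, ← Real.rpow_add (by positivity),
            show π * l + -π * (l / 2) + -π * (l / 2) = 0 by ring,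
            show 2 * ((α + β + 1) / 2) - 1 + (2 * ((α - β + 1) / 2) - 1) = 2 * α by ring,
            Real.exp_zero, Real.div_rpow hl0.le two_pos.le, Real.rpow_add_one hl0.ne',
            Real.rpow_add_one two_ne_zero]
          field_simp
  rw [inv_sq_norm_jacobiC α β hl0.ne']
  calc _ ≤ Ca * Cb / 2 ^ (2 * α + 1) * l ^ (2 * α + 1) /
        (π * ((2 : ℝ) ^ (α + β + 1)) ^ 2 * ‖Gamma (α + 1)‖ ^ 2) := by gcongr
    _ = _ := by ring

theorem inv_sq_norm_jacobiC_le (α β : ℝ) (ha : 0 < α + β + 1) (hb : 0 < α - β + 1) :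
    ∃ M : ℝ, 0 < M ∧ ∀ l : ℝ, 0 < l → (‖jacobiC α β l‖ ^ 2)⁻¹ ≤ M * (1 + l ^ (2 * α + 1)) := by
  obtain ⟨M₀, hM₀⟩ := inv_sq_norm_jacobiC_le_of_le_one α β ha hb
  obtain ⟨M₁, hM₁⟩ := inv_sq_norm_jacobiC_le_of_one_le α β ha.le hb.le
  refine ⟨max (max M₀ M₁) 1, by positivity, fun l hl => ?_⟩
  have hpow : 0 ≤ l ^ (2 * α + 1) := Real.rpow_nonneg hl.le _
  rcases le_total l 1 with hl1 | hl1
  · calc _ ≤ M₀ := hM₀ l hl hl1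
      _ ≤ max (max M₀ M₁) 1 := le_max_of_le_left (le_max_left _ _)
      _ ≤ _ := le_mul_of_one_le_right (by positivity) (by linarith)
  · calc _ ≤ M₁ * l ^ (2 * α + 1) := hM₁ l hl1
      _ ≤ max (max M₀ M₁) 1 * l ^ (2 * α + 1) := by
        gcongr; exact le_max_of_le_left (le_max_right _ _)
      _ ≤ _ := by gcongr; linarith

theorem plancherelMeasure_le_withDensity {α β M s : ℝ}
    (hw : ∀ l : ℝ, 0 < l → (‖jacobiC α β l‖ ^ 2)⁻¹ ≤ M * (1 + l ^ s)) :
    plancherelMeasure α β ≤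
      (volume.restrict (Ioi 0)).withDensity fun l => ENNReal.ofReal (M * (1 + l ^ s)) :=
  withDensity_mono <| (ae_restrict_iff' measurableSet_Ioi).mpr <|
    ae_of_all _ fun l hl => ENNReal.ofReal_le_ofReal (hw l hl)

theorem heatKernel_plancherel_bound (α β : ℝ) (hβ : -(1/2 : ℝ) < β) (hαβ : β < α) :
    ∃ C : ℝ, 0 < C ∧ ∀ t : ℝ, 0 < t →
      (∫ l in Set.Ioi (0 : ℝ),
          Real.exp (-2 * t * (l ^ 2 + (α + β + 1) ^ 2)) *
            (‖jacobiC α β (l : ℂ)‖ ^ 2)⁻¹) ≤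
        C * Real.exp (-2 * t * (α + β + 1) ^ 2) * (1 + t ^ (-(α + 1) : ℝ)) ∧
      MemLp (fun l : ℝ => Real.exp (-t * (l ^ 2 + (α + β + 1) ^ 2))) 2
        (plancherelMeasure α β) := by
  obtain ⟨M, hM, hw⟩ := inv_sq_norm_jacobiC_le α β (by linarith) (by linarith)
  have hw' : ∀ l : ℝ, 0 < l → (‖jacobiC α β l‖ ^ 2)⁻¹ ≤ M * (1 + l ^ (2 * (α + 1) - 1)) := by
    simpa only [show 2 * (α + 1) - 1 = 2 * α + 1 by ring] using hw
  have hK : 0 < (Real.Gamma (1 / 2) + Real.Gamma (α + 1)) / 2 := by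
    have := Real.Gamma_pos_of_pos (by linarith : 0 < α + 1)
    positivity
  refine ⟨M * ((Real.Gamma (1 / 2) + Real.Gamma (α + 1)) / 2), mul_pos hM hK, fun t ht =>
    ⟨setIntegral_exp_neg_two_mul_sq_add_mul_le ht (by linarith) (fun l _ => by positivity) hw', ?_⟩⟩
  exact (memLp_exp_neg_mul_sq_withDensity ht (by linarith) hM.le).mono_measure
    (plancherelMeasure_le_withDensity hw)
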